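/- For h(x) = (y^T z − 1)^2/2 with x = (y,z) ∈ R^{2d}, λ > 0, and independent v, w ~ N(0, I_d), the one-step expected zeroth-order drift satisfies E[(h(x+λu) − h(x−λu))/(2λ) · v] = (y^T z − 1) z + λ^2 y and E[(h(x+λu) − h(x−λu))/(2λ) · w] = (y^T z − 1) y + λ^2 z, where u = (v, w). -/

import Mathlib

open MeasureTheory ProbabilityTheory

/-- The standard Gaussian measure on `ℝ^d`, with i.i.d. `N(0,1)` coordinates. -/
noncomputable def stdGaussian (d : ℕ) : Measure (Fin d → ℝ) :=
  Measure.pi fun _ => gaussianReal 0 1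

/-- The test function `h(y,z) = (yᵀz − 1)²/2` on `ℝ^d × ℝ^d`. -/
noncomputable def hFun {d : ℕ} (p : (Fin d → ℝ) × (Fin d → ℝ)) : ℝ :=
  (∑ i, p.1 i * p.2 i - 1) ^ 2 / 2

/-!
Since `h(y,z) = (yᵀz − 1)²/2`, the central difference factors as
`(h(x+λu) − h(x−λu))/(2λ) = (yᵀz − 1 + λ² vᵀw)(yᵀw + zᵀv)`.
Multiplying by `vᵢ` and expanding, every term is a product of a polynomial in `v` and one in `w`,
so its expectation factors; only `E[vvᵀ] = E[wwᵀ] = I` and `E[w] = 0` survive, which gives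
`(yᵀz − 1) zᵢ + λ² yᵢ`. The identity for `w` follows from the one for `v` by swapping the roles of
`(y, v)` and `(z, w)`, under which both `h` and the product Gaussian are invariant.
-/

open scoped ENNReal NNReal Matrix

lemma hFun_add_sub_hFun_sub_div {d : ℕ} {lam : ℝ} (hlam : lam ≠ 0) (y z v w : Fin d → ℝ) :
    (hFun (y + lam • v, z + lam • w) - hFun (y - lam • v, z - lam • w)) / (2 * lam)
      = (y ⬝ᵥ z - 1 + lam ^ 2 * v ⬝ᵥ w) * (y ⬝ᵥ w + z ⬝ᵥ v) := by
  change ((_ ⬝ᵥ _ - 1) ^ 2 / 2 - (_ ⬝ᵥ _ - 1) ^ 2 / 2) / _ = _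
  simp only [add_dotProduct, dotProduct_add, sub_dotProduct, dotProduct_sub, smul_dotProduct,
    dotProduct_smul, smul_eq_mul, dotProduct_comm v z]
  field_simp
  ring

lemma MeasureTheory.MemLp.integrable_mul_mul {α : Type*} [MeasurableSpace α] {μ : Measure α}
    {f g h : α → ℝ} (hf : MemLp f 3 μ) (hg : MemLp g 3 μ) (hh : MemLp h 3 μ) :
    Integrable (fun x => f x * g x * h x) μ := by
  have : ENNReal.HolderConjugate (3⁻¹ + 3⁻¹)⁻¹ 3 := by
    rw [ENNReal.holderConjugate_iff, inv_inv, ← ENNReal.add_thirds 1, one_div]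
  exact (hg.mul' hf (hpqr := .of 3 3)).integrable_mul hh

lemma drift_integrand_expand {ι : Type*} [Fintype ι] (c s : ℝ) (y z v w : ι → ℝ) (i : ι) :
    (c + s * v ⬝ᵥ w) * (y ⬝ᵥ w + z ⬝ᵥ v) * v i
      = c * (v i * y ⬝ᵥ w) + c * (v i * z ⬝ᵥ v)
        + s * ∑ k, (v i * v k) * (w k * y ⬝ᵥ w) + s * ∑ k, (v i * v k * z ⬝ᵥ v) * w k := by
  have hvw : v ⬝ᵥ w = ∑ k, v k * w k := rfl
  have hY : ∑ k, (v i * v k) * (w k * y ⬝ᵥ w) = v i * y ⬝ᵥ w * v ⬝ᵥ w := by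
    rw [hvw, Finset.mul_sum]
    exact Finset.sum_congr rfl fun k _ => by ring
  have hZ : ∑ k, (v i * v k * z ⬝ᵥ v) * w k = v i * z ⬝ᵥ v * v ⬝ᵥ w := by
    rw [hvw, Finset.mul_sum]
    exact Finset.sum_congr rfl fun k _ => by ring
  rw [hY, hZ]
  ring

section Moments

variable {ι : Type*} [Fintype ι] {μ ν : Measure (ι → ℝ)}

lemma memLp_dotProduct {p : ℝ≥0∞} (hμ : ∀ j, MemLp (fun v : ι → ℝ => v j) p μ) (a : ι → ℝ) :
    MemLp (fun v => a ⬝ᵥ v) p μ :=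
  memLp_finsetSum _ fun j _ => (hμ j).const_mul (a j)

lemma integral_dotProduct (hμ : ∀ j, Integrable (fun v : ι → ℝ => v j) μ) (a : ι → ℝ) :
    ∫ v, a ⬝ᵥ v ∂μ = a ⬝ᵥ fun j => ∫ v, v j ∂μ := by
  simp_rw [dotProduct]
  rw [integral_finsetSum _ fun j _ => (hμ j).const_mul (a j)]
  simp_rw [integral_const_mul]

lemma integral_mul_dotProduct {f : (ι → ℝ) → ℝ} (hf : ∀ j, Integrable (fun v => f v * v j) μ)
    (a : ι → ℝ) : ∫ v, f v * a ⬝ᵥ v ∂μ = a ⬝ᵥ fun j => ∫ v, f v * v j ∂μ := by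
  simp_rw [dotProduct, Finset.mul_sum, mul_left_comm (f _)]
  rw [integral_finsetSum _ fun j _ => (hf j).const_mul (a j)]
  simp_rw [integral_const_mul]

lemma integral_apply_mul_dotProduct [DecidableEq ι]
    (hμ : ∀ j k, Integrable (fun v : ι → ℝ => v j * v k) μ)
    (hμ_cov : ∀ j k, ∫ v, v j * v k ∂μ = if j = k then 1 else 0) (a : ι → ℝ) (k : ι) :
    ∫ v, v k * a ⬝ᵥ v ∂μ = a k := by
  rw [integral_mul_dotProduct (hμ k), funext (hμ_cov k)]
  simp [dotProduct]

lemma integral_drift_mul_fst [DecidableEq ι] [IsProbabilityMeasure μ] [IsProbabilityMeasure ν]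
    (hμ : ∀ j, MemLp (fun v : ι → ℝ => v j) 3 μ)
    (hμ_cov : ∀ j k, ∫ v, v j * v k ∂μ = if j = k then 1 else 0)
    (hν : ∀ j, MemLp (fun w : ι → ℝ => w j) 2 ν) (hν_mean : ∀ j, ∫ w, w j ∂ν = 0)
    (hν_cov : ∀ j k, ∫ w, w j * w k ∂ν = if j = k then 1 else 0)
    (c s : ℝ) (y z : ι → ℝ) (i : ι) :
    ∫ p, (c + s * p.1 ⬝ᵥ p.2) * (y ⬝ᵥ p.2 + z ⬝ᵥ p.1) * p.1 i ∂μ.prod ν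
      = c * z i + s * y i := by
  have hμ₂ j : MemLp (fun v : ι → ℝ => v j) 2 μ := (hμ j).mono_exponent (by norm_num)
  have hμvv j k : Integrable (fun v : ι → ℝ => v j * v k) μ := (hμ₂ j).integrable_mul (hμ₂ k)
  have hνw j : Integrable (fun w : ι → ℝ => w j) ν := (hν j).integrable (by norm_num)
  have hνww j k : Integrable (fun w : ι → ℝ => w j * w k) ν := (hν j).integrable_mul (hν k)
  have h₁ : Integrable (fun p : (ι → ℝ) × (ι → ℝ) => p.1 i * y ⬝ᵥ p.2) (μ.prod ν) :=
    ((hμ i).integrable (by norm_num)).mul_prod ((memLp_dotProduct hν y).integrable (by norm_num))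
  have h₂ : Integrable (fun p : (ι → ℝ) × (ι → ℝ) => p.1 i * z ⬝ᵥ p.1) (μ.prod ν) :=
    ((hμ₂ i).integrable_mul (memLp_dotProduct hμ₂ z)).comp_fst ν
  have h₃ k : Integrable (fun p : (ι → ℝ) × (ι → ℝ) => (p.1 i * p.1 k) * (p.2 k * y ⬝ᵥ p.2))
      (μ.prod ν) := (hμvv i k).mul_prod ((hν k).integrable_mul (memLp_dotProduct hν y))
  have h₄ k : Integrable (fun p : (ι → ℝ) × (ι → ℝ) => (p.1 i * p.1 k * z ⬝ᵥ p.1) * p.2 k)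
      (μ.prod ν) := ((hμ i).integrable_mul_mul (hμ k) (memLp_dotProduct hμ z)).mul_prod (hνw k)
  have e₁ : ∫ p, p.1 i * y ⬝ᵥ p.2 ∂μ.prod ν = 0 := by
    rw [integral_prod_mul (fun v : ι → ℝ => v i) (fun w => y ⬝ᵥ w), integral_dotProduct hνw]
    simp [hν_mean, dotProduct]
  have e₂ : ∫ p, p.1 i * z ⬝ᵥ p.1 ∂μ.prod ν = z i := by
    rw [integral_fun_fst (fun v : ι → ℝ => v i * z ⬝ᵥ v),
      integral_apply_mul_dotProduct hμvv hμ_cov]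
    simp
  have e₃ k : ∫ p, (p.1 i * p.1 k) * (p.2 k * y ⬝ᵥ p.2) ∂μ.prod ν
      = (if i = k then 1 else 0) * y k := by
    rw [integral_prod_mul (fun v : ι → ℝ => v i * v k) (fun w => w k * y ⬝ᵥ w), hμ_cov,
      integral_apply_mul_dotProduct hνww hν_cov]
  have e₄ k : ∫ p, (p.1 i * p.1 k * z ⬝ᵥ p.1) * p.2 k ∂μ.prod ν = 0 := by
    rw [integral_prod_mul (fun v : ι → ℝ => v i * v k * z ⬝ᵥ v) (fun w : ι → ℝ => w k), hν_mean,
      mul_zero]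
  have h₃' := (integrable_finsetSum Finset.univ fun k _ => h₃ k).const_mul s
  have h₄' := (integrable_finsetSum Finset.univ fun k _ => h₄ k).const_mul s
  simp_rw [drift_integrand_expand]
  rw [integral_add ((h₁.const_mul c |>.fun_add (h₂.const_mul c)).fun_add h₃') h₄',
    integral_add (h₁.const_mul c |>.fun_add (h₂.const_mul c)) h₃',
    integral_add (h₁.const_mul c) (h₂.const_mul c)]
  simp only [integral_const_mul, integral_finsetSum _ fun k _ => h₃ k,
    integral_finsetSum _ fun k _ => h₄ k, e₁, e₂, e₃, e₄]
  simp

end Moments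

section Gaussian

variable {d : ℕ}

instance : IsProbabilityMeasure (stdGaussian d) := by
  unfold _root_.stdGaussian
  infer_instance

lemma memLp_stdGaussian_apply (p : ℝ≥0) (j : Fin d) :
    MemLp (fun v => v j) p (stdGaussian d) :=
  (memLp_id_gaussianReal p).comp_measurePreserving (measurePreserving_eval _ j)

lemma integral_stdGaussian_apply (j : Fin d) : ∫ v, v j ∂stdGaussian d = 0 := by
  rw [_root_.stdGaussian, integral_eval, integral_id_gaussianReal]

lemma integral_stdGaussian_apply_mul_apply (j k : Fin d) :
    ∫ v, v j * v k ∂stdGaussian d = if j = k then 1 else 0 := by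
  rcases eq_or_ne j k with rfl | hjk
  · have h := variance_fun_id_gaussianReal (μ := 0) (v := 1)
    rw [variance_eq_integral measurable_id'.aemeasurable, integral_id_gaussianReal] at h
    rw [if_pos rfl, _root_.stdGaussian, integral_comp_eval (f := fun x => x * x) (by fun_prop)]
    simpa [sq] using h
  · have hind : IndepFun (fun v : Fin d → ℝ => v j) (fun v => v k) (stdGaussian d) :=
      (iIndepFun_pi (X := fun _ (x : ℝ) => x) fun _ => aemeasurable_id).indepFun hjk
    rw [if_neg hjk, hind.integral_fun_mul_eq_mul_integral (memLp_stdGaussian_apply 1 j).1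
      (memLp_stdGaussian_apply 1 k).1, integral_stdGaussian_apply, zero_mul]

end Gaussian

/-- For `h(y,z) = (yᵀz−1)²/2`, `λ > 0`, and independent `v, w ~ N(0, I_d)`, the
expected zeroth-order drift with `u = (v,w)` satisfies
`E[(h(x+λu) − h(x−λu))/(2λ) · v] = (yᵀz − 1) z + λ² y` and
`E[(h(x+λu) − h(x−λu))/(2λ) · w] = (yᵀz − 1) y + λ² z`, coordinatewise. -/
theorem zo_drift_on_hFun (d : ℕ) (lam : ℝ) (hlam : 0 < lam) (y z : Fin d → ℝ) :
    (∀ i : Fin d,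
      ∫ p, (hFun (y + lam • p.1, z + lam • p.2) - hFun (y - lam • p.1, z - lam • p.2))
          / (2 * lam) * p.1 i ∂((stdGaussian d).prod (stdGaussian d))
        = (∑ j, y j * z j - 1) * z i + lam ^ 2 * y i) ∧
    (∀ i : Fin d,
      ∫ p, (hFun (y + lam • p.1, z + lam • p.2) - hFun (y - lam • p.1, z - lam • p.2))
          / (2 * lam) * p.2 i ∂((stdGaussian d).prod (stdGaussian d))
        = (∑ j, y j * z j - 1) * y i + lam ^ 2 * z i) := by
  have drift i (y z : Fin d → ℝ) := integral_drift_mul_fst (μ := stdGaussian d)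
    (ν := stdGaussian d) (memLp_stdGaussian_apply 3) integral_stdGaussian_apply_mul_apply
    (memLp_stdGaussian_apply 2) integral_stdGaussian_apply
    integral_stdGaussian_apply_mul_apply (y ⬝ᵥ z - 1) (lam ^ 2) y z i
  simp_rw [hFun_add_sub_hFun_sub_div hlam.ne']
  refine ⟨fun i => drift i y z, fun i => ?_⟩
  rw [show ∑ j, y j * z j = z ⬝ᵥ y from dotProduct_comm y z, ← drift i z y,
    ← integral_prod_swap]
  congr 1
  funext p
  simp only [Prod.fst_swap, Prod.snd_swap, dotProduct_comm p.2 p.1, dotProduct_comm z y]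
  ring
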